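/- arXiv:0808.1138 — 4 statements merged into one kernel-verified Lean document; each statement's English description precedes it below -/
import Mathlib

section
/- In a connected graph C, the block-cut tree is a tree: the bipartite graph whose node set is V(C) ∪ 𝔅(C) (vertices of C together with blocks of C), with an edge between a vertex v and a block B whenever v ∈ B, is connected and acyclic. -/
/-- A set `B` of vertices induces a 2-connected subgraph of `G`: it has at least
two vertices, the induced subgraph is connected, and it stays connected after
deleting any one vertex.  (A single edge with its two endpoints counts as
2-connected.) -/
def Is2ConnectedSet {V : Type} (G : SimpleGraph V) (B : Set V) : Prop :=
  2 ≤ B.ncard ∧ (G.induce B).Connected ∧ ∀ v ∈ B, (G.induce (B \ {v})).Connected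

/-- A block of `G` is a maximal 2-connected induced subgraph. -/
def IsBlock {V : Type} (G : SimpleGraph V) (B : Set V) : Prop :=
  Is2ConnectedSet G B ∧ ∀ B' : Set V, B ⊆ B' → Is2ConnectedSet G B' → B' = B

/-!
Every edge of a finite graph lies in a maximal 2-connected set, i.e. a block, and every block
is nonempty; so walks of `G` lift to the block-cut graph, which is therefore connected when `G`
is. For acyclicity, each edge `v — B` is a bridge: otherwise a path `B' — ⋯ — B` avoiding `v`
runs from another block `B' ∋ v` to `B`, and the union of the blocks along it, closed up
through `v`, is 2-connected, contradicting the maximality of `B'` and `B`.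
-/

open SimpleGraph

variable {V : Type} {G : SimpleGraph V}

namespace Is2ConnectedSet

variable {B : Set V}

lemma nonempty (hB : Is2ConnectedSet G B) : B.Nonempty :=
  Set.nonempty_of_ncard_ne_zero (by have := hB.1; omega)

lemma connected_induce_diff (hB : Is2ConnectedSet G B) (u : V) :
    (G.induce (B \ {u})).Connected := by
  by_cases hu : u ∈ B
  · exact hB.2.2 u hu
  · rw [Set.sdiff_singleton_eq_self hu]
    exact hB.2.1

end Is2ConnectedSet

lemma is2ConnectedSet_pair {x y : V} (h : G.Adj x y) : Is2ConnectedSet G {x, y} := by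
  refine ⟨by rw [Set.ncard_pair h.ne], induce_pair_connected_of_adj h, ?_⟩
  rintro v (rfl | rfl)
  · rw [Set.pair_sdiff_left h.ne]
    exact Connected.of_subsingleton
  · rw [Set.pair_sdiff_right h.ne]
    exact Connected.of_subsingleton

lemma exists_isBlock_of_adj [Finite V] {x y : V} (h : G.Adj x y) :
    ∃ B, IsBlock G B ∧ x ∈ B ∧ y ∈ B := by
  obtain ⟨B, hxyB, hB, hmax⟩ := Set.Finite.exists_le_maximal (s := {B | Is2ConnectedSet G B})
    (Set.toFinite _) (is2ConnectedSet_pair h)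
  exact ⟨B, ⟨hB, fun B' hBB' hB' => (hmax hB' hBB').antisymm hBB'⟩,
    hxyB (by simp), hxyB (by simp)⟩

/-- The properties of the union `U` of a chain of 2-connected sets from `A` to `B`, consecutive
members meeting in vertices of `L`, that survive extending the chain by one more set. -/
structure IsBlockChain (G : SimpleGraph V) (A B U L : Set V) : Prop where
  left_subset : A ⊆ U
  right_subset : B ⊆ U
  connected : (G.induce U).Connected
  connected_induce_diff : ∀ u ∉ L, (G.induce (U \ {u})).Connected
  split : ∀ u, ∃ S T : Set V, A \ {u} ⊆ S ∧ B \ {u} ⊆ T ∧ S ∪ T = U \ {u} ∧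
    (G.induce S).Connected ∧ (G.induce T).Connected

lemma Is2ConnectedSet.isBlockChain {A : Set V} (hA : Is2ConnectedSet G A) :
    IsBlockChain G A A A ∅ where
  left_subset := subset_rfl
  right_subset := subset_rfl
  connected := hA.2.1
  connected_induce_diff u _ := hA.connected_induce_diff u
  split u := ⟨A \ {u}, A \ {u}, subset_rfl, subset_rfl, Set.union_self _,
    hA.connected_induce_diff u, hA.connected_induce_diff u⟩

lemma IsBlockChain.cons {A B C U L : Set V} {v : V} (hA : Is2ConnectedSet G A)
    (hU : IsBlockChain G B C U L) (hvA : v ∈ A) (hvB : v ∈ B) (hvL : v ∉ L) :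
    IsBlockChain G A C (A ∪ U) (insert v L) where
  left_subset := Set.subset_union_left
  right_subset := hU.right_subset.trans Set.subset_union_right
  connected := induce_union_connected hA.2.1.preconnected hU.connected.preconnected
    ⟨v, hvA, hU.left_subset hvB⟩
  connected_induce_diff u hu := by
    rw [Set.mem_insert_iff, not_or] at hu
    rw [Set.union_sdiff_distrib]
    exact induce_union_connected (hA.connected_induce_diff u).preconnected
      (hU.connected_induce_diff u hu.2).preconnected
      ⟨v, ⟨hvA, Ne.symm hu.1⟩, hU.left_subset hvB, Ne.symm hu.1⟩
  split u := by
    rcases eq_or_ne u v with rfl | huv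
    · exact ⟨A \ {u}, U \ {u}, subset_rfl, Set.sdiff_subset_sdiff_left hU.right_subset,
        Set.union_sdiff_distrib.symm, hA.connected_induce_diff u, hU.connected_induce_diff u hvL⟩
    · obtain ⟨S, T, hAS, hCT, hST, hS, hT⟩ := hU.split u
      refine ⟨A \ {u} ∪ S, T, Set.subset_union_left, hCT, ?_, ?_, hT⟩
      · rw [Set.union_assoc, hST, Set.union_sdiff_distrib]
      · exact induce_union_connected (hA.connected_induce_diff u).preconnected hS.preconnected
          ⟨v, ⟨hvA, huv.symm⟩, hAS ⟨hvB, huv.symm⟩⟩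

/-- A common vertex `w` of the two ends that is not a link closes the chain into a cycle. -/
lemma IsBlockChain.is2ConnectedSet [Finite V] {A B U L : Set V} {w : V}
    (hU : IsBlockChain G A B U L) (hA : Is2ConnectedSet G A) (hwA : w ∈ A) (hwB : w ∈ B)
    (hwL : w ∉ L) : Is2ConnectedSet G U := by
  refine ⟨hA.1.trans (Set.ncard_le_ncard hU.left_subset), hU.connected, fun u _ => ?_⟩
  rcases eq_or_ne u w with rfl | huw
  · exact hU.connected_induce_diff u hwL
  obtain ⟨S, T, hAS, hBT, hST, hS, hT⟩ := hU.split u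
  rw [← hST]
  exact induce_union_connected hS.preconnected hT.preconnected
    ⟨w, hAS ⟨hwA, huw.symm⟩, hBT ⟨hwB, huw.symm⟩⟩

lemma IsBlock.eq_of_isBlockChain [Finite V] {A B U L : Set V} {w : V} (hA : IsBlock G A)
    (hB : IsBlock G B) (hU : IsBlockChain G A B U L) (hwA : w ∈ A) (hwB : w ∈ B)
    (hwL : w ∉ L) : A = B :=
  have hUA : U = A := hA.2 U hU.left_subset (hU.is2ConnectedSet hA.1 hwA hwB hwL)
  hB.2 A (hUA ▸ hU.right_subset) hA.1

def blockCutGraph (G : SimpleGraph V) : SimpleGraph (V ⊕ {B : Set V // IsBlock G B}) :=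
  SimpleGraph.fromRel fun a b => ∃ (v : V) (B : {B : Set V // IsBlock G B}),
    a = Sum.inl v ∧ b = Sum.inr B ∧ v ∈ B.1

section blockCutGraph

variable {v w : V} {A B : {B : Set V // IsBlock G B}}

@[simp]
lemma blockCutGraph_adj_inl_inr : (blockCutGraph G).Adj (.inl v) (.inr B) ↔ v ∈ B.1 := by
  simp [blockCutGraph]

@[simp]
lemma blockCutGraph_adj_inr_inl : (blockCutGraph G).Adj (.inr B) (.inl v) ↔ v ∈ B.1 := by
  simp [blockCutGraph]

@[simp]
lemma blockCutGraph_not_adj_inl_inl : ¬ (blockCutGraph G).Adj (.inl v) (.inl w) := by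
  simp [blockCutGraph]

@[simp]
lemma blockCutGraph_not_adj_inr_inr : ¬ (blockCutGraph G).Adj (.inr A) (.inr B) := by
  simp [blockCutGraph]

end blockCutGraph

lemma exists_isBlockChain_of_isPath : ∀ {A B : {B : Set V // IsBlock G B}}
    (p : (blockCutGraph G).Walk (.inr A) (.inr B)), p.IsPath →
    ∃ U, IsBlockChain G A.1 B.1 U {v | .inl v ∈ p.support}
  | A, _, .nil, _ => ⟨A.1, by simpa using A.2.1.isBlockChain⟩
  | _, _, .cons (v := .inr _) h _, _ => absurd h (by simp)
  | _, _, .cons (v := .inl _) _ (.cons (v := .inl _) h _), _ => absurd h (by simp)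
  | A, _, .cons (v := .inl v) hAv (.cons (v := .inr C) hvC p), hp => by
    rw [Walk.cons_isPath_iff, Walk.cons_isPath_iff] at hp
    obtain ⟨U, hU⟩ := exists_isBlockChain_of_isPath p hp.1.1
    refine ⟨A.1 ∪ U, ?_⟩
    convert hU.cons A.2.1 (by simpa using hAv) (by simpa using hvC) (by simpa using hp.1.2) using 1
    ext u
    simp

lemma blockCutGraph_reachable_inl_of_reachable [Finite V] {u v : V} (h : G.Reachable u v) :
    (blockCutGraph G).Reachable (.inl u) (.inl v) := by
  obtain ⟨p⟩ := h
  induction p with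
  | nil => rfl
  | cons hxy _ ih =>
    obtain ⟨B, hB, hxB, hyB⟩ := exists_isBlock_of_adj hxy
    have hx : (blockCutGraph G).Adj (.inl _) (.inr ⟨B, hB⟩) := blockCutGraph_adj_inl_inr.2 hxB
    have hy : (blockCutGraph G).Adj (.inr ⟨B, hB⟩) (.inl _) := blockCutGraph_adj_inr_inl.2 hyB
    exact (hx.reachable.trans hy.reachable).trans ih

lemma blockCutGraph_connected [Finite V] (hG : G.Connected) : (blockCutGraph G).Connected := by
  obtain ⟨v₀⟩ := hG.nonempty
  refine (connected_iff_exists_forall_reachable _).2 ⟨.inl v₀, ?_⟩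
  rintro (v | B)
  · exact blockCutGraph_reachable_inl_of_reachable (hG.preconnected v₀ v)
  · obtain ⟨v, hv⟩ := B.2.1.nonempty
    exact (blockCutGraph_reachable_inl_of_reachable (hG.preconnected v₀ v)).trans
      (blockCutGraph_adj_inl_inr.2 hv).reachable

lemma blockCutGraph_isBridge [Finite V] {w : V} {B : {B : Set V // IsBlock G B}} (hwB : w ∈ B.1) :
    (blockCutGraph G).IsBridge s(.inl w, .inr B) := by
  classical
  rw [isBridge_iff_forall_walk_mem_edges]
  intro p
  by_contra hpw
  obtain ⟨q, hq, hqw⟩ : ∃ q : (blockCutGraph G).Walk (.inl w) (.inr B),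
      q.IsPath ∧ s(.inl w, .inr B) ∉ q.edges :=
    ⟨p.bypass, p.bypass_isPath, fun h => hpw (p.edges_bypass_subset_edges h)⟩
  cases q with
  | @cons _ x _ hwx q =>
    cases x with
    | inl => simp at hwx
    | inr A =>
      rw [Walk.cons_isPath_iff] at hq
      have hAB : A ≠ B := by
        rintro rfl
        simp at hqw
      obtain ⟨U, hU⟩ := exists_isBlockChain_of_isPath q hq.1
      exact hAB <| Subtype.ext <|
        A.2.eq_of_isBlockChain B.2 hU (by simpa using hwx) hwB (by simpa using hq.2)

lemma blockCutGraph_isAcyclic [Finite V] : (blockCutGraph G).IsAcyclic := by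
  rw [isAcyclic_iff_forall_adj_isBridge]
  rintro (v | A) (w | B) h
  · simp at h
  · exact blockCutGraph_isBridge (by simpa using h)
  · rw [Sym2.eq_swap]
    exact blockCutGraph_isBridge (by simpa using h)
  · simp at h

theorem blockCutTree_isTree_general {V : Type} [Fintype V]
    (G : SimpleGraph V) (hG : G.Connected) :
    (SimpleGraph.fromRel
      (fun a b : V ⊕ {B : Set V // IsBlock G B} =>
        ∃ (v : V) (B : {B : Set V // IsBlock G B}),
          a = Sum.inl v ∧ b = Sum.inr B ∧ v ∈ B.1)).IsTree :=
  ⟨blockCutGraph_connected hG, blockCutGraph_isAcyclic⟩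

/-- The block-cut tree of a (finite) connected graph is a tree: the bipartite
graph on `V(C) ⊕ 𝔅(C)` with an edge between a vertex `v` and a block `B`
whenever `v ∈ B` is connected and acyclic. -/
theorem blockCutTree_isTree {V : Type} [Fintype V] [Nonempty V]
    (G : SimpleGraph V) (hG : G.Connected) :
    (SimpleGraph.fromRel
      (fun a b : V ⊕ {B : Set V // IsBlock G B} =>
        ∃ (v : V) (B : {B : Set V // IsBlock G B}),
          a = Sum.inl v ∧ b = Sum.inr B ∧ v ∈ B.1)).IsTree :=
  blockCutTree_isTree_general G hG
end

section
/- Let η₁, η₂ be formal power series defined from β₁, β₂ by η₁ = β₁/(1 − β₁ − 2β₂) and η₂ = β₂/(1 − β₂ − 2β₁) (well-defined since β₁, β₂ have zero constant term). Then conversely β₁ = η₁(1 − η₂)/(1 + η₁ + η₂ − 3η₁η₂) and β₂ = η₂(1 − η₁)/(1 + η₁ + η₂ − 3η₁η₂). -/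
theorem mul_one_add_add_sub_three_mul_eq {R : Type*} [CommRing R] {b₁ b₂ e₁ e₂ : R}
    (h₁ : e₁ * (1 - b₁ - 2 * b₂) = b₁) (h₂ : e₂ * (1 - b₂ - 2 * b₁) = b₂) :
    b₁ * (1 + e₁ + e₂ - 3 * e₁ * e₂) = e₁ * (1 - e₂) := by
  linear_combination -(1 + e₂) * h₁ + 2 * e₁ * h₂

theorem beta_eta_inversion_general {σ : Type} (β₁ β₂ η₁ η₂ : MvPowerSeries σ ℚ)
    (hη₁ : η₁ * (1 - β₁ - 2 * β₂) = β₁)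
    (hη₂ : η₂ * (1 - β₂ - 2 * β₁) = β₂) :
    β₁ * (1 + η₁ + η₂ - 3 * η₁ * η₂) = η₁ * (1 - η₂) ∧
    β₂ * (1 + η₁ + η₂ - 3 * η₁ * η₂) = η₂ * (1 - η₁) :=
  ⟨mul_one_add_add_sub_three_mul_eq hη₁ hη₂,
    by linear_combination mul_one_add_add_sub_three_mul_eq hη₂ hη₁⟩

/-- Let `β₁, β₂` be formal power series with zero constant term and define
`η₁ = β₁/(1 − β₁ − 2β₂)`, `η₂ = β₂/(1 − β₂ − 2β₁)` (the denominators having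
constant term 1, hence being invertible).  Then conversely
`β₁ = η₁(1 − η₂)/(1 + η₁ + η₂ − 3η₁η₂)` and
`β₂ = η₂(1 − η₁)/(1 + η₁ + η₂ − 3η₁η₂)` (the denominator again being
invertible with constant term 1). -/
theorem beta_eta_inversion {σ : Type} (β₁ β₂ η₁ η₂ : MvPowerSeries σ ℚ)
    (hβ₁ : MvPowerSeries.constantCoeff β₁ = 0)
    (hβ₂ : MvPowerSeries.constantCoeff β₂ = 0)
    (hη₁ : η₁ * (1 - β₁ - 2 * β₂) = β₁)
    (hη₂ : η₂ * (1 - β₂ - 2 * β₁) = β₂) :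
    β₁ * (1 + η₁ + η₂ - 3 * η₁ * η₂) = η₁ * (1 - η₂) ∧
    β₂ * (1 + η₁ + η₂ - 3 * η₁ * η₂) = η₂ * (1 - η₁) :=
  beta_eta_inversion_general β₁ β₂ η₁ η₂ hη₁ hη₂
end

section
/- Suppose η₁, η₂ are formal power series in x, t with zero constant term satisfying η₁ = x t² (1 − η₂)^{−2} and η₂ = t² (1 − η₁)^{−2}. Define β₁ = η₁(1 − η₂)/(1 + η₁ + η₂ − 3η₁η₂), β₂ = η₂(1 − η₁)/(1 + η₁ + η₂ − 3η₁η₂), and s by t = s·(1 + M) where M = (1 − 2β₁ − 2β₂)/((1 − β₁ − 2β₂)(1 − β₂ − 2β₁)) − 1. Then β₁ = x s² + β₁² + 2β₁β₂ and β₂ = s² + β₂² + 2β₁β₂. -/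
open PowerSeries

/-! With `D = 1 + η₁ + η₂ − 3η₁η₂` one finds `(1 − β₁ − 2β₂) D = 1 − η₂`,
`(1 − β₂ − 2β₁) D = 1 − η₁` and `(1 − 2β₁ − 2β₂) D = (1 − η₁)(1 − η₂)`, so that
`1 + M = D` and `t = s D`. Then `β₁ − β₁² − 2β₁β₂ = β₁ (1 − β₁ − 2β₂) = η₁ (1 − η₂)² / D²
= x t² / D² = x s²`, and symmetrically for `β₂`. -/

section EtaDenom

variable {R : Type*} [CommRing R] {η₁ η₂ β₁ β₂ : R}

def etaDenom (η₁ η₂ : R) : R := 1 + η₁ + η₂ - 3 * η₁ * η₂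

theorem etaDenom_comm (η₁ η₂ : R) : etaDenom η₁ η₂ = etaDenom η₂ η₁ := by
  unfold etaDenom; ring

variable (hβ₁ : β₁ * etaDenom η₁ η₂ = η₁ * (1 - η₂))
  (hβ₂ : β₂ * etaDenom η₁ η₂ = η₂ * (1 - η₁))
include hβ₁ hβ₂

theorem one_sub_beta_mul_etaDenom : (1 - β₁ - 2 * β₂) * etaDenom η₁ η₂ = 1 - η₂ := by
  unfold etaDenom at *; linear_combination -hβ₁ - 2 * hβ₂

theorem one_sub_two_beta_mul_etaDenom :
    (1 - 2 * β₁ - 2 * β₂) * etaDenom η₁ η₂ = (1 - η₁) * (1 - η₂) := by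
  unfold etaDenom at *; linear_combination -2 * hβ₁ - 2 * hβ₂

theorem eq_etaDenom_of_mul_eq {m : R} (hη : IsUnit ((1 - η₁) * (1 - η₂)))
    (hm : m * ((1 - β₁ - 2 * β₂) * (1 - β₂ - 2 * β₁)) = 1 - 2 * β₁ - 2 * β₂) :
    m = etaDenom η₁ η₂ := by
  have hβ₂₁ : (1 - β₂ - 2 * β₁) * etaDenom η₁ η₂ = 1 - η₁ := by
    rw [etaDenom_comm] at hβ₁ hβ₂ ⊢
    exact one_sub_beta_mul_etaDenom hβ₂ hβ₁
  refine hη.mul_right_cancel ?_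
  calc m * ((1 - η₁) * (1 - η₂))
      = m * ((1 - β₁ - 2 * β₂) * (1 - β₂ - 2 * β₁)) * etaDenom η₁ η₂ ^ 2 := by
        rw [← one_sub_beta_mul_etaDenom hβ₁ hβ₂, ← hβ₂₁]; ring
    _ = (1 - 2 * β₁ - 2 * β₂) * etaDenom η₁ η₂ * etaDenom η₁ η₂ := by rw [hm]; ring
    _ = etaDenom η₁ η₂ * ((1 - η₁) * (1 - η₂)) := by
        rw [one_sub_two_beta_mul_etaDenom hβ₁ hβ₂]; ring

theorem beta_eq_of_mul_etaDenom {c t s : R} (hD : IsUnit (etaDenom η₁ η₂))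
    (hη : η₁ * (1 - η₂) ^ 2 = c * t ^ 2) (ht : t = s * etaDenom η₁ η₂) :
    β₁ = c * s ^ 2 + β₁ ^ 2 + 2 * β₁ * β₂ := by
  have key : β₁ * (1 - β₁ - 2 * β₂) * etaDenom η₁ η₂ ^ 2 = c * s ^ 2 * etaDenom η₁ η₂ ^ 2 :=
    calc β₁ * (1 - β₁ - 2 * β₂) * etaDenom η₁ η₂ ^ 2
        = β₁ * etaDenom η₁ η₂ * ((1 - β₁ - 2 * β₂) * etaDenom η₁ η₂) := by ring
      _ = c * t ^ 2 := by rw [hβ₁, one_sub_beta_mul_etaDenom hβ₁ hβ₂, ← hη]; ring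
      _ = c * s ^ 2 * etaDenom η₁ η₂ ^ 2 := by rw [ht]; ring
  linear_combination (hD.pow 2).mul_right_cancel key

end EtaDenom

theorem PowerSeries.isUnit_etaDenom {R : Type*} [CommRing R] {η₁ η₂ : R⟦X⟧}
    (h₁ : constantCoeff η₁ = 0) (h₂ : constantCoeff η₂ = 0) :
    IsUnit (etaDenom η₁ η₂) := by
  simp [isUnit_iff_constantCoeff, etaDenom, h₁, h₂]

theorem PowerSeries.isUnit_one_sub_mul_one_sub {R : Type*} [CommRing R] {η₁ η₂ : R⟦X⟧}
    (h₁ : constantCoeff η₁ = 0) (h₂ : constantCoeff η₂ = 0) :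
    IsUnit ((1 - η₁) * (1 - η₂)) := by
  simp [isUnit_iff_constantCoeff, h₁, h₂]

/-- Compatibility of the parametrizations `(β₁, β₂)` and `(η₁, η₂)` used for
rooted maps and rooted 2-connected maps.  We work in `ℚ[x][[t]]`, with `t` the
power series variable `X` and `x = Polynomial.X`.  Suppose `η₁, η₂` have zero
constant term and satisfy `η₁ = x t² (1 − η₂)⁻²`, `η₂ = t² (1 − η₁)⁻²`.  Define
`β₁ = η₁(1 − η₂)/(1 + η₁ + η₂ − 3η₁η₂)`,
`β₂ = η₂(1 − η₁)/(1 + η₁ + η₂ − 3η₁η₂)`, let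
`1 + M = (1 − 2β₁ − 2β₂)/((1 − β₁ − 2β₂)(1 − β₂ − 2β₁))`, and define `s` by
`t = s(1 + M)`.  Then `β₁ = x s² + β₁² + 2β₁β₂` and `β₂ = s² + β₂² + 2β₁β₂`. -/
theorem beta_system_from_eta_system
    (η₁ η₂ β₁ β₂ M s : PowerSeries (Polynomial ℚ))
    (hη₁0 : PowerSeries.constantCoeff η₁ = 0)
    (hη₂0 : PowerSeries.constantCoeff η₂ = 0)
    (hη₁ : η₁ * (1 - η₂) ^ 2 =
      PowerSeries.C Polynomial.X * PowerSeries.X ^ 2)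
    (hη₂ : η₂ * (1 - η₁) ^ 2 = PowerSeries.X ^ 2)
    (hβ₁ : β₁ * (1 + η₁ + η₂ - 3 * η₁ * η₂) = η₁ * (1 - η₂))
    (hβ₂ : β₂ * (1 + η₁ + η₂ - 3 * η₁ * η₂) = η₂ * (1 - η₁))
    (hM : (1 + M) * ((1 - β₁ - 2 * β₂) * (1 - β₂ - 2 * β₁))
            = 1 - 2 * β₁ - 2 * β₂)
    (hs : PowerSeries.X = s * (1 + M)) :
    β₁ = PowerSeries.C Polynomial.X * s ^ 2 + β₁ ^ 2 + 2 * β₁ * β₂ ∧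
    β₂ = s ^ 2 + β₂ ^ 2 + 2 * β₁ * β₂ := by
  change β₁ * etaDenom η₁ η₂ = _ at hβ₁
  change β₂ * etaDenom η₁ η₂ = _ at hβ₂
  have hD := isUnit_etaDenom hη₁0 hη₂0
  have ht : X = s * etaDenom η₁ η₂ := by
    rwa [eq_etaDenom_of_mul_eq hβ₁ hβ₂ (isUnit_one_sub_mul_one_sub hη₁0 hη₂0) hM] at hs
  refine ⟨beta_eq_of_mul_etaDenom hβ₁ hβ₂ hD hη₁ ht, ?_⟩
  rw [etaDenom_comm] at hβ₁ hβ₂ hD ht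
  linear_combination beta_eq_of_mul_etaDenom (c := 1) hβ₂ hβ₁ hD (by rw [hη₂, one_mul]) ht
end

section
/- Suppose γ₁, γ₂ are formal power series in x, w with zero constant term satisfying γ₁ = x w (1 + γ₂)² and γ₂ = w (1 + γ₁)². Set η₁ = γ₁/(1 + γ₁ + γ₂) and η₂ = γ₂/(1 + γ₁ + γ₂), and define y = η₂(1 − η₁)² ∈ ℚ[x][[w]]. Then w = η₂(1 − η₁ − η₂)/(1 − η₂)², x w = η₁(1 − η₁ − η₂)/(1 − η₁)², and y = γ₁γ₂/(x w (1 + γ₁ + γ₂)³) (the last identity holds after multiplying through by x w). -/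
/-!
With `D = 1 + γ₁ + γ₂`, the defining relations `ηᵢ D = γᵢ` give `(1 - η₁) D = 1 + γ₂`,
`(1 - η₂) D = 1 + γ₁` and `(1 - η₁ - η₂) D = 1`. So `D` is a unit, and multiplying each
identity by a power of `D` turns it into one of the equations defining `γ₁`, `γ₂`.
Nothing beyond commutative ring arithmetic is involved.
-/

open PowerSeries

section CommRing

variable {R : Type*} [CommRing R] {a γ₁ γ₂ η₁ η₂ : R}

theorem one_sub_mul_eq_one_add (h₁ : η₁ * (1 + γ₁ + γ₂) = γ₁) :
    (1 - η₁) * (1 + γ₁ + γ₂) = 1 + γ₂ := by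
  linear_combination -h₁

theorem one_sub_sub_mul_eq_one (h₁ : η₁ * (1 + γ₁ + γ₂) = γ₁)
    (h₂ : η₂ * (1 + γ₁ + γ₂) = γ₂) : (1 - η₁ - η₂) * (1 + γ₁ + γ₂) = 1 := by
  linear_combination -h₁ - h₂

theorem mul_one_sub_sq_eq_mul_one_sub_sub (h₁ : η₁ * (1 + γ₁ + γ₂) = γ₁)
    (h₂ : η₂ * (1 + γ₁ + γ₂) = γ₂) (hγ₂ : γ₂ = a * (1 + γ₁) ^ 2) :
    a * (1 - η₂) ^ 2 = η₂ * (1 - η₁ - η₂) := by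
  have hD : IsUnit ((1 + γ₁ + γ₂) ^ 2) :=
    (IsUnit.of_mul_eq_one_right _ (one_sub_sub_mul_eq_one h₁ h₂)).pow 2
  have h₂' : (1 - η₂) * (1 + γ₁ + γ₂) = 1 + γ₁ := by linear_combination -h₂
  refine hD.mul_left_inj.mp ?_
  calc a * (1 - η₂) ^ 2 * (1 + γ₁ + γ₂) ^ 2
      = a * ((1 - η₂) * (1 + γ₁ + γ₂)) ^ 2 := by ring
    _ = (η₂ * (1 + γ₁ + γ₂)) * ((1 - η₁ - η₂) * (1 + γ₁ + γ₂)) := by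
      rw [h₂', h₂, one_sub_sub_mul_eq_one h₁ h₂, mul_one, hγ₂]
    _ = η₂ * (1 - η₁ - η₂) * (1 + γ₁ + γ₂) ^ 2 := by ring

theorem mul_one_sub_sq_mul_cube_eq_mul (h₁ : η₁ * (1 + γ₁ + γ₂) = γ₁)
    (h₂ : η₂ * (1 + γ₁ + γ₂) = γ₂) (hγ₁ : γ₁ = a * (1 + γ₂) ^ 2) :
    η₂ * (1 - η₁) ^ 2 * (a * (1 + γ₁ + γ₂) ^ 3) = γ₁ * γ₂ :=
  calc η₂ * (1 - η₁) ^ 2 * (a * (1 + γ₁ + γ₂) ^ 3)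
      = (η₂ * (1 + γ₁ + γ₂)) * (a * ((1 - η₁) * (1 + γ₁ + γ₂)) ^ 2) := by ring
    _ = γ₁ * γ₂ := by rw [h₂, one_sub_mul_eq_one_add h₁, ← hγ₁, mul_comm]

end CommRing

theorem gamma_eta_y_identities_general
    (γ₁ γ₂ η₁ η₂ y : PowerSeries (Polynomial ℚ))
    (hγ₁ : γ₁ = PowerSeries.C Polynomial.X * PowerSeries.X * (1 + γ₂) ^ 2)
    (hγ₂ : γ₂ = PowerSeries.X * (1 + γ₁) ^ 2)
    (hη₁ : η₁ * (1 + γ₁ + γ₂) = γ₁)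
    (hη₂ : η₂ * (1 + γ₁ + γ₂) = γ₂)
    (hy : y = η₂ * (1 - η₁) ^ 2) :
    PowerSeries.X * (1 - η₂) ^ 2 = η₂ * (1 - η₁ - η₂) ∧
    PowerSeries.C Polynomial.X * PowerSeries.X * (1 - η₁) ^ 2
        = η₁ * (1 - η₁ - η₂) ∧
    y * (PowerSeries.C Polynomial.X * PowerSeries.X * (1 + γ₁ + γ₂) ^ 3)
        = γ₁ * γ₂ := by
  have hη₁' : η₁ * (1 + γ₂ + γ₁) = γ₁ := by rwa [add_right_comm]
  have hη₂' : η₂ * (1 + γ₂ + γ₁) = γ₂ := by rwa [add_right_comm]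
  refine ⟨mul_one_sub_sq_eq_mul_one_sub_sub hη₁ hη₂ hγ₂, ?_, ?_⟩
  · rw [sub_right_comm]
    exact mul_one_sub_sq_eq_mul_one_sub_sub hη₂' hη₁' hγ₁
  · rw [hy]
    exact mul_one_sub_sq_mul_cube_eq_mul hη₁ hη₂ hγ₁

/-- Algebraic manipulations connecting the parametrizations used for counting
rooted 2-connected versus rooted 3-connected planar maps.  We work in
`ℚ[x][[w]]`, with `w` the power series variable `X` and `x = Polynomial.X`.
Suppose `γ₁, γ₂` have zero constant term and satisfy `γ₁ = x w (1 + γ₂)²`,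
`γ₂ = w (1 + γ₁)²`.  Set `η₁ = γ₁/(1 + γ₁ + γ₂)`, `η₂ = γ₂/(1 + γ₁ + γ₂)` and
define `y = η₂(1 − η₁)²`.  Then `w = η₂(1 − η₁ − η₂)/(1 − η₂)²`,
`x w = η₁(1 − η₁ − η₂)/(1 − η₁)²`, and
`y = γ₁γ₂/(x w (1 + γ₁ + γ₂)³)` (the last identity after multiplying through
by `x w`). -/
theorem gamma_eta_y_identities
    (γ₁ γ₂ η₁ η₂ y : PowerSeries (Polynomial ℚ))
    (hγ₁0 : PowerSeries.constantCoeff γ₁ = 0)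
    (hγ₂0 : PowerSeries.constantCoeff γ₂ = 0)
    (hγ₁ : γ₁ = PowerSeries.C Polynomial.X * PowerSeries.X * (1 + γ₂) ^ 2)
    (hγ₂ : γ₂ = PowerSeries.X * (1 + γ₁) ^ 2)
    (hη₁ : η₁ * (1 + γ₁ + γ₂) = γ₁)
    (hη₂ : η₂ * (1 + γ₁ + γ₂) = γ₂)
    (hy : y = η₂ * (1 - η₁) ^ 2) :
    PowerSeries.X * (1 - η₂) ^ 2 = η₂ * (1 - η₁ - η₂) ∧
    PowerSeries.C Polynomial.X * PowerSeries.X * (1 - η₁) ^ 2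
        = η₁ * (1 - η₁ - η₂) ∧
    y * (PowerSeries.C Polynomial.X * PowerSeries.X * (1 + γ₁ + γ₂) ^ 3)
        = γ₁ * γ₂ :=
  gamma_eta_y_identities_general γ₁ γ₂ η₁ η₂ y hγ₁ hγ₂ hη₁ hη₂ hy
end
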